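/- Assume v ∈ ℂ with Im v > -g, where g = 1/2 + α/β > 0 and β > 0. If φ : ℝ → ℂ is continuous with |φ(x)| ≤ a·e^{b|x|} for some a, b ≥ 0, then the integral [𝒦(v)φ](x) = ∫_{ln β}^∞ exp(-2ivy - e^{y-x}) (1+βe^{-y})^{-iv-g} (1-βe^{-y})^{-iv+g-1} φ(-y) dy converges absolutely for every x ∈ ℝ, and there exist constants A, B ≥ 0 with |[𝒦(v)φ](x)| ≤ A·e^{B|x|} for all x. -/

import Mathlib

open MeasureTheory

/-- Integrand of the reflection operator `𝒦(v)` applied to `φ`, with `g = 1/2 + α/β`. -/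
noncomputable def reflInt (α β : ℝ) (v : ℂ) (φ : ℝ → ℂ) (x y : ℝ) : ℂ :=
  Complex.exp (-2 * Complex.I * v * (y : ℂ) - Complex.exp ((y - x : ℝ) : ℂ)) *
    ((1 + β * Real.exp (-y) : ℝ) : ℂ) ^ (-Complex.I * v - ((1 / 2 + α / β : ℝ) : ℂ)) *
    ((1 - β * Real.exp (-y) : ℝ) : ℂ) ^ (-Complex.I * v + ((1 / 2 + α / β : ℝ) : ℂ) - 1) *
    φ (-y)

open Real Set

/-!
The integrand is `exp (-exp (y - x)) • W y` with a weight `W` independent of `x`. On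
`(log β, ∞)`, with `t = y - log β`, one has `β e^{-y} = e^{-t}`, so `1 + β e^{-y} ∈ [1, 2]`,
`1 - β e^{-y} ≥ t e^{-t}`, and `φ (-y)` grows at most exponentially; hence
`‖W y‖ ≤ K t^c e^{m t}` with `c = min (Im v + g - 1) 0 > -1`. Since
`exp (-e^s) ≤ n! e^{-n s}` for every `n`, taking `n > m` dominates the integrand by
`n! K e^{-n log β} e^{n x} t^c e^{-(n-m) t}`, which is integrable in `y`; this gives absolute
convergence and the bound with `B = n`.
-/

lemma exp_neg_exp_le_factorial_mul_exp_neg (n : ℕ) (s : ℝ) :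
    exp (-exp s) ≤ n.factorial * exp (-(n * s)) := by
  have h : exp (n * s) / n.factorial ≤ exp (exp s) := by
    rw [exp_nat_mul]
    exact pow_div_factorial_le_exp _ (exp_pos s).le n
  calc exp (-exp s) = (exp (exp s))⁻¹ := exp_neg _
    _ ≤ (exp (n * s) / n.factorial)⁻¹ := inv_anti₀ (by positivity) h
    _ = n.factorial * exp (-(n * s)) := by rw [exp_neg, inv_div, div_eq_mul_inv]

lemma mul_exp_neg_le_one_sub_exp_neg (t : ℝ) : t * exp (-t) ≤ 1 - exp (-t) := by
  have h := mul_le_mul_of_nonneg_right (add_one_le_exp t) (exp_pos (-t)).le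
  rw [← exp_add, add_neg_cancel, exp_zero] at h
  linarith

lemma one_sub_exp_neg_rpow_le {t : ℝ} (ht : 0 < t) (r : ℝ) :
    (1 - exp (-t)) ^ r ≤ t ^ min r 0 * exp (-min r 0 * t) := by
  have hlow := mul_exp_neg_le_one_sub_exp_neg t
  have hpos : 0 < t * exp (-t) := by positivity
  calc (1 - exp (-t)) ^ r ≤ (1 - exp (-t)) ^ min r 0 :=
        rpow_le_rpow_of_exponent_ge (hpos.trans_le hlow) (by linarith [exp_pos (-t)])
          (min_le_left _ _)
    _ ≤ (t * exp (-t)) ^ min r 0 := rpow_le_rpow_of_nonpos hpos hlow (min_le_right _ _)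
    _ = t ^ min r 0 * exp (-min r 0 * t) := by
        rw [mul_rpow ht.le (exp_pos _).le, ← exp_mul]
        ring_nf

lemma one_add_rpow_le_two_rpow_abs {u : ℝ} (hu₀ : 0 ≤ u) (hu₁ : u ≤ 1) (r : ℝ) :
    (1 + u) ^ r ≤ 2 ^ |r| :=
  calc (1 + u) ^ r ≤ (1 + u) ^ |r| := rpow_le_rpow_of_exponent_le (by linarith) (le_abs_self r)
    _ ≤ 2 ^ |r| := rpow_le_rpow (by linarith) (by linarith) (abs_nonneg r)

lemma integrableOn_Ioi_sub_rpow_mul_exp {L c δ : ℝ} (hc : -1 < c) (hδ : 0 < δ) :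
    IntegrableOn (fun y => (y - L) ^ c * exp (-δ * (y - L))) (Ioi L) := by
  have h := integrableOn_rpow_mul_exp_neg_mul_rpow hc one_pos hδ
  simp only [rpow_one] at h
  simpa [Function.comp_def] using ((measurePreserving_sub_right volume L).integrableOn_comp_preimage
    (MeasurableEquiv.subRight L).measurableEmbedding).2 h

section DoubleExponentialKernel

variable {E : Type*} [NormedAddCommGroup E] [NormedSpace ℝ E] {W : ℝ → E} {L K c m : ℝ}

lemma norm_exp_neg_exp_sub_smul_le
    (hW : ∀ y ∈ Ioi L, ‖W y‖ ≤ K * ((y - L) ^ c * exp (m * (y - L))))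
    (n : ℕ) (x : ℝ) {y : ℝ} (hy : y ∈ Ioi L) :
    ‖exp (-exp (y - x)) • W y‖ ≤
      n.factorial * K * exp (-(n * L)) * exp (n * x) *
        ((y - L) ^ c * exp (-(n - m) * (y - L))) := by
  have hexp : exp (-(n * (y - x))) * exp (m * (y - L)) =
      exp (-(n * L)) * exp (n * x) * exp (-(n - m) * (y - L)) := by
    simp only [← exp_add]
    ring_nf
  rw [norm_smul, norm_of_nonneg (exp_pos _).le]
  calc exp (-exp (y - x)) * ‖W y‖
      ≤ (n.factorial * exp (-(n * (y - x)))) * (K * ((y - L) ^ c * exp (m * (y - L)))) :=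
        mul_le_mul (exp_neg_exp_le_factorial_mul_exp_neg n _) (hW y hy) (norm_nonneg _)
          (by positivity)
    _ = _ := by linear_combination (n.factorial * K * (y - L) ^ c) * hexp

theorem integrableOn_exp_neg_exp_sub_smul_and_exists_norm_integral_le
    (hWc : ContinuousOn W (Ioi L)) (hc : -1 < c)
    (hW : ∀ y ∈ Ioi L, ‖W y‖ ≤ K * ((y - L) ^ c * exp (m * (y - L)))) :
    (∀ x : ℝ, IntegrableOn (fun y => exp (-exp (y - x)) • W y) (Ioi L)) ∧
    ∃ A B : ℝ, 0 ≤ A ∧ 0 ≤ B ∧ ∀ x : ℝ,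
      ‖∫ y in Ioi L, exp (-exp (y - x)) • W y‖ ≤ A * exp (B * |x|) := by
  obtain ⟨n, hn⟩ := exists_nat_gt m
  set F : ℝ → ℝ := fun y => (y - L) ^ c * exp (-(n - m) * (y - L))
  have hF : IntegrableOn F (Ioi L) := integrableOn_Ioi_sub_rpow_mul_exp hc (by linarith)
  have hK : 0 ≤ K := by
    have h := (norm_nonneg _).trans (hW (L + 1) (by simp))
    simp only [add_sub_cancel_left, one_rpow, one_mul, mul_one] at h
    exact nonneg_of_mul_nonneg_left h (exp_pos m)
  have hFint : 0 ≤ ∫ y in Ioi L, F y := setIntegral_nonneg measurableSet_Ioi fun y hy => by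
    have : 0 ≤ y - L := sub_nonneg.2 (le_of_lt hy)
    positivity
  set C := n.factorial * K * exp (-(n * L))
  have hdom (x : ℝ) : ∀ᵐ y ∂volume.restrict (Ioi L),
      ‖exp (-exp (y - x)) • W y‖ ≤ C * exp (n * x) * F y :=
    ae_restrict_of_forall_mem measurableSet_Ioi fun _ => norm_exp_neg_exp_sub_smul_le hW n x
  refine ⟨fun x => (hF.const_mul _).mono' ?_ (hdom x),
    C * ∫ y in Ioi L, F y, n, by positivity, n.cast_nonneg, fun x => ?_⟩
  · exact ((by fun_prop : Continuous fun y => exp (-exp (y - x))).continuousOn.smul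
      hWc).aestronglyMeasurable measurableSet_Ioi
  calc ‖∫ y in Ioi L, exp (-exp (y - x)) • W y‖
      ≤ ∫ y in Ioi L, C * exp (n * x) * F y :=
        norm_integral_le_of_norm_le (hF.const_mul _) (hdom x)
    _ = (C * ∫ y in Ioi L, F y) * exp (n * x) := by rw [integral_const_mul]; ring
    _ ≤ (C * ∫ y in Ioi L, F y) * exp (n * |x|) := by gcongr; exact le_abs_self x

end DoubleExponentialKernel

noncomputable def reflWeight (g β : ℝ) (v : ℂ) (φ : ℝ → ℂ) (y : ℝ) : ℂ :=
  Complex.exp (-2 * Complex.I * v * y) *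
    ((1 + β * exp (-y) : ℝ) : ℂ) ^ (-Complex.I * v - g) *
    ((1 - β * exp (-y) : ℝ) : ℂ) ^ (-Complex.I * v + g - 1) * φ (-y)

lemma reflInt_eq_smul (α β : ℝ) (v : ℂ) (φ : ℝ → ℂ) (x y : ℝ) :
    reflInt α β v φ x y = exp (-exp (y - x)) • reflWeight (1 / 2 + α / β) β v φ y := by
  rw [reflInt, reflWeight, Complex.real_smul, sub_eq_add_neg _ (Complex.exp _), Complex.exp_add]
  push_cast
  ring

section Weight

variable {g β : ℝ} {v : ℂ} {φ : ℝ → ℂ}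

lemma mul_exp_neg_eq_exp_neg_sub_log (hβ : 0 < β) (y : ℝ) :
    β * exp (-y) = exp (-(y - log β)) := by
  rw [neg_sub, exp_sub, exp_log hβ, exp_neg, div_eq_mul_inv]

lemma norm_reflWeight (hβ : 0 < β) {y : ℝ} (hy : log β < y) :
    ‖reflWeight g β v φ y‖ = exp (2 * v.im * y) * (1 + exp (-(y - log β))) ^ (v.im - g) *
      (1 - exp (-(y - log β))) ^ (v.im + g - 1) * ‖φ (-y)‖ := by
  have h₁ : 0 < 1 + β * exp (-y) := by positivity
  have h₂ : 0 < 1 - β * exp (-y) := by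
    rw [mul_exp_neg_eq_exp_neg_sub_log hβ, sub_pos, exp_lt_one_iff]
    linarith
  rw [reflWeight, norm_mul, norm_mul, norm_mul, Complex.norm_exp,
    Complex.norm_cpow_eq_rpow_re_of_pos h₁, Complex.norm_cpow_eq_rpow_re_of_pos h₂,
    mul_exp_neg_eq_exp_neg_sub_log hβ]
  congr 3 <;> simp

lemma norm_reflWeight_le {a b : ℝ} (hβ : 0 < β) (ha : 0 ≤ a) (hb : 0 ≤ b)
    (hφ : ∀ x, ‖φ x‖ ≤ a * exp (b * |x|)) {y : ℝ} (hy : log β < y) :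
    ‖reflWeight g β v φ y‖ ≤ 2 ^ |v.im - g| * a * exp (b * |log β| + 2 * v.im * log β) *
      ((y - log β) ^ min (v.im + g - 1) 0 *
        exp ((2 * v.im + b - min (v.im + g - 1) 0) * (y - log β))) := by
  set c := min (v.im + g - 1) 0
  have ht : 0 < y - log β := sub_pos.2 hy
  have hφy : ‖φ (-y)‖ ≤ a * exp (b * |log β|) * exp (b * (y - log β)) := by
    have habs : |-y| ≤ |log β| + (y - log β) := by
      rw [abs_neg, ← abs_of_pos ht]
      linarith [abs_sub_abs_le_abs_sub y (log β)]
    calc ‖φ (-y)‖ ≤ a * exp (b * |-y|) := hφ (-y)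
      _ ≤ a * exp (b * (|log β| + (y - log β))) := by gcongr
      _ = a * exp (b * |log β|) * exp (b * (y - log β)) := by
          rw [mul_assoc, ← exp_add]
          ring_nf
  have hexp : exp (2 * v.im * y) * exp (-c * (y - log β)) * exp (b * (y - log β)) =
      exp (2 * v.im * log β) * exp ((2 * v.im + b - c) * (y - log β)) := by
    simp only [← exp_add]
    ring_nf
  rw [norm_reflWeight hβ hy]
  calc exp (2 * v.im * y) * (1 + exp (-(y - log β))) ^ (v.im - g) *
        (1 - exp (-(y - log β))) ^ (v.im + g - 1) * ‖φ (-y)‖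
      ≤ exp (2 * v.im * y) * 2 ^ |v.im - g| * ((y - log β) ^ c * exp (-c * (y - log β))) *
          (a * exp (b * |log β|) * exp (b * (y - log β))) := by
        gcongr
        · exact (rpow_pos_of_pos (sub_pos.2 (exp_lt_one_iff.2 (by linarith))) _).le
        · exact one_add_rpow_le_two_rpow_abs (exp_pos _).le (exp_le_one_iff.2 (by linarith)) _
        · exact one_sub_exp_neg_rpow_le ht _
    _ = _ := by
        rw [exp_add]
        linear_combination (2 ^ |v.im - g| * a * exp (b * |log β|) * (y - log β) ^ c) * hexp

lemma continuousOn_reflWeight (hβ : 0 < β) (hφ : Continuous φ) :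
    ContinuousOn (reflWeight g β v φ) (Ioi (log β)) := by
  refine ContinuousOn.mul (ContinuousOn.mul (ContinuousOn.mul (by fun_prop) ?_) ?_)
    (hφ.comp continuous_neg).continuousOn
  · have h : Continuous fun y : ℝ => ((1 + β * exp (-y) : ℝ) : ℂ) := by fun_prop
    exact h.continuousOn.cpow_const fun y _ => Complex.ofReal_mem_slitPlane.2 (by positivity)
  · have h : Continuous fun y : ℝ => ((1 - β * exp (-y) : ℝ) : ℂ) := by fun_prop
    refine h.continuousOn.cpow_const fun y hy => Complex.ofReal_mem_slitPlane.2 ?_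
    rw [mul_exp_neg_eq_exp_neg_sub_log hβ, sub_pos, exp_lt_one_iff]
    linarith [mem_Ioi.1 hy]

end Weight

theorem stmt16_general (α β : ℝ) (v : ℂ) (hβ : 0 < β)
    (hv : -(1 / 2 + α / β) < v.im)
    (φ : ℝ → ℂ) (hφ : Continuous φ)
    (hbound : ∃ a b : ℝ, 0 ≤ a ∧ 0 ≤ b ∧ ∀ x : ℝ, ‖φ x‖ ≤ a * Real.exp (b * |x|)) :
    (∀ x : ℝ, IntegrableOn (fun y => reflInt α β v φ x y) (Set.Ioi (Real.log β))) ∧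
    ∃ A B : ℝ, 0 ≤ A ∧ 0 ≤ B ∧ ∀ x : ℝ,
      ‖∫ y in Set.Ioi (Real.log β), reflInt α β v φ x y‖ ≤ A * Real.exp (B * |x|) := by
  obtain ⟨a, b, ha, hb, hφb⟩ := hbound
  have hc : -1 < min (v.im + (1 / 2 + α / β) - 1) 0 := lt_min (by linarith) (by norm_num)
  simp only [reflInt_eq_smul]
  exact integrableOn_exp_neg_exp_sub_smul_and_exists_norm_integral_le
    (continuousOn_reflWeight hβ hφ) hc fun y hy => norm_reflWeight_le hβ ha hb hφb hy

theorem stmt16 (α β : ℝ) (v : ℂ) (hβ : 0 < β) (hg : 0 < 1 / 2 + α / β)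
    (hv : -(1 / 2 + α / β) < v.im)
    (φ : ℝ → ℂ) (hφ : Continuous φ)
    (hbound : ∃ a b : ℝ, 0 ≤ a ∧ 0 ≤ b ∧ ∀ x : ℝ, ‖φ x‖ ≤ a * Real.exp (b * |x|)) :
    (∀ x : ℝ, IntegrableOn (fun y => reflInt α β v φ x y) (Set.Ioi (Real.log β))) ∧
    ∃ A B : ℝ, 0 ≤ A ∧ 0 ≤ B ∧ ∀ x : ℝ,
      ‖∫ y in Set.Ioi (Real.log β), reflInt α β v φ x y‖ ≤ A * Real.exp (B * |x|) :=
  stmt16_general α β v hβ hv φ hφ hbound
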